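/- The check product code satisfies C₁ ⋆ C₂ = (C₁^⊥ ⊗ C₂^⊥)^⊥; equivalently, the orthogonal complement (with respect to the standard bilinear form on F₂^{n₁n₂}) of ker(H₁⊗H₂), where H₁⊗H₂ is the Kronecker product, satisfies ker(H₁⊗H₂)^⊥ = (row space of H₁) ⊗ (row space of H₂) as subspaces of F₂^{n₁n₂}. -/

import Mathlib

open Matrix Kronecker
def dualCode {ι : Type*} [Fintype ι] (C : Submodule (ZMod 2) (ι → ZMod 2)) :
    Submodule (ZMod 2) (ι → ZMod 2) where
  carrier := {y | ∀ x ∈ C, ∑ i, x i * y i = 0}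
  add_mem' := by
    intro a b ha hb x hx
    have := ha x hx
    have := hb x hx
    simp only [Pi.add_apply, mul_add, Finset.sum_add_distrib, *, add_zero]
  zero_mem' := by intro x _; simp
  smul_mem' := by
    intro c y hy x hx
    have h : ∑ i, x i * (c • y) i = c * ∑ i, x i * y i := by
      rw [Finset.mul_sum]
      refine Finset.sum_congr rfl fun i _ => ?_
      simp [Pi.smul_apply, smul_eq_mul]; ring
    simp [Set.mem_setOf_eq] at *
    rw [h, hy x hx, mul_zero]

open Kronecker
lemma dual_ker {ι κ : Type*} [Fintype ι] [Fintype κ] [DecidableEq ι] [DecidableEq κ]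
    (M : Matrix κ ι (ZMod 2)) :
    dualCode (LinearMap.ker M.mulVecLin) = LinearMap.range M.transpose.mulVecLin := by
  apply le_antisymm
  · intro y hy
    by_contra hmem
    obtain ⟨f, hfy, hfbot⟩ := Submodule.exists_dual_map_eq_bot_of_notMem hmem inferInstance
    set z : ι → ZMod 2 := fun i => f (Pi.single i 1) with hz
    have hfv : ∀ v : ι → ZMod 2, f v = ∑ i, v i * z i := by
      intro v
      conv_lhs => rw [← show ∑ i, v i • Pi.single i (1:ZMod 2) = v by
        simp [← Pi.single_smul, Finset.univ_sum_single]]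
      rw [map_sum]
      exact Finset.sum_congr rfl fun i _ => by simp [z, smul_eq_mul]
    have hW : ∀ w ∈ LinearMap.range M.transpose.mulVecLin, f w = 0 := by
      intro w hw
      have : f w ∈ Submodule.map f (LinearMap.range M.transpose.mulVecLin) :=
        Submodule.mem_map_of_mem hw
      rw [hfbot] at this
      simpa using this
    have hzker : z ∈ LinearMap.ker M.mulVecLin := by
      rw [LinearMap.mem_ker]
      funext j
      have hcol : Mᵀ.mulVec (Pi.single j 1) = fun i => M j i := by
        funext i; simp [Matrix.mulVec_single, Matrix.transpose_apply]
      have := hW (Mᵀ.mulVec (Pi.single j 1)) ⟨Pi.single j 1, rfl⟩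
      rw [hcol, hfv] at this
      simpa [Matrix.mulVecLin_apply, Matrix.mulVec, dotProduct] using this
    have := hy z hzker
    apply hfy
    rw [hfv]
    rw [← this]
    exact Finset.sum_congr rfl fun i _ => mul_comm _ _
  · rintro y ⟨v, rfl⟩ x hx
    rw [LinearMap.mem_ker] at hx
    have : ∑ i, x i * Mᵀ.mulVecLin v i = x ⬝ᵥ Mᵀ.mulVec v := rfl
    rw [this, Matrix.dotProduct_mulVec, Matrix.vecMul_transpose]
    simp [Matrix.mulVecLin_apply] at hx
    rw [hx]
    simp

lemma kron_span {m₁ n₁ m₂ n₂ : ℕ}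
    (H₁ : Matrix (Fin m₁) (Fin n₁) (ZMod 2)) (H₂ : Matrix (Fin m₂) (Fin n₂) (ZMod 2)) :
    LinearMap.range (H₁ ⊗ₖ H₂).transpose.mulVecLin =
      Submodule.span (ZMod 2)
        {w : Fin n₁ × Fin n₂ → ZMod 2 |
          ∃ y₁ ∈ LinearMap.range H₁.transpose.mulVecLin,
            ∃ y₂ ∈ LinearMap.range H₂.transpose.mulVecLin,
              w = fun p => y₁ p.1 * y₂ p.2} := by
  rw [Matrix.range_mulVecLin, Matrix.col_transpose]
  apply le_antisymm
  · rw [Submodule.span_le]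
    rintro _ ⟨⟨i, j⟩, rfl⟩
    apply Submodule.subset_span
    refine ⟨fun k => H₁ i k, ⟨Pi.single i 1, ?_⟩, fun k => H₂ j k, ⟨Pi.single j 1, ?_⟩, ?_⟩
    · funext k; simp [Matrix.mulVecLin_apply, Matrix.mulVec_single, Matrix.transpose_apply]
    · funext k; simp [Matrix.mulVecLin_apply, Matrix.mulVec_single, Matrix.transpose_apply]
    · funext p; rfl
  · rw [Submodule.span_le]
    rintro w ⟨y₁, ⟨x₁, rfl⟩, y₂, ⟨x₂, rfl⟩, rfl⟩
    have : (fun p : Fin n₁ × Fin n₂ => H₁ᵀ.mulVecLin x₁ p.1 * H₂ᵀ.mulVecLin x₂ p.2) =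
        ∑ ij : Fin m₁ × Fin m₂, (x₁ ij.1 * x₂ ij.2) • (H₁ ⊗ₖ H₂) ij := by
      funext p
      simp only [Matrix.mulVecLin_apply, Matrix.mulVec, dotProduct,
        Matrix.transpose_apply, Finset.sum_apply, Pi.smul_apply, smul_eq_mul,
        Matrix.kroneckerMap_apply, Fintype.sum_prod_type]
      rw [Finset.sum_mul_sum]
      exact Finset.sum_congr rfl fun i _ => Finset.sum_congr rfl fun j _ => by ring
    rw [this]
    exact Submodule.sum_mem _ fun ij _ =>
      Submodule.smul_mem _ _ (Submodule.subset_span ⟨ij, rfl⟩)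

/-- Check product duality C₁ ⋆ C₂ = (C₁^⊥ ⊗ C₂^⊥)^⊥ : the dual of ker(H₁⊗ₖH₂)
equals the tensor product of the row spaces of H₁ and H₂. -/
theorem stmt4 (m₁ n₁ m₂ n₂ : ℕ)
    (H₁ : Matrix (Fin m₁) (Fin n₁) (ZMod 2)) (H₂ : Matrix (Fin m₂) (Fin n₂) (ZMod 2)) :
    dualCode (LinearMap.ker (H₁ ⊗ₖ H₂).mulVecLin) =
      Submodule.span (ZMod 2)
        {w : Fin n₁ × Fin n₂ → ZMod 2 |
          ∃ y₁ ∈ LinearMap.range H₁.transpose.mulVecLin,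
            ∃ y₂ ∈ LinearMap.range H₂.transpose.mulVecLin,
              w = fun p => y₁ p.1 * y₂ p.2} := by
  rw [dual_ker, kron_span]
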